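/- Let k ≥ 1, m ≥ 1, n = k + m, and let S be a skew-symmetric n×n complex matrix. On the polynomial ring ℂ[y_{ij} : 1 ≤ i ≤ k, 1 ≤ j ≤ m], define the bilinear bracket {f, g} = Σ_{(i,j),(α,β)} π_{(i,j),(α,β)} · (∂f/∂y_{ij}) · (∂g/∂y_{αβ}), where π_{(i,j),(α,β)} = ½·(sign(α−i) − sign(β−j))·y_{iβ}·y_{αj} + ½·(S_{i,β+k} + S_{j+k,α} − S_{i,α} − S_{j+k,β+k})·y_{ij}·y_{αβ}. Then this bracket satisfies the Jacobi identity: {f, {g, h}} + {g, {h, f}} + {h, {f, g}} = 0 for all polynomials f, g, h. (In particular, {·,·}_S^{Gr} is a Poisson bracket on the open Schubert cell G_k^0(n); the case S = 0 is the standard Poisson homogeneous bracket.) -/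

import Mathlib

open MvPolynomial

/-- The bracket `{·,·}_S^{Gr}` on the polynomial ring `ℂ[y_{ij} : i ∈ [k], j ∈ [m]]`
in the coordinates of the open Schubert cell of `G_k(n)`, `n = k + m`, given as a
bivector: `{f,g} = Σ π_{(i,j),(α,β)} (∂f/∂y_{ij})(∂g/∂y_{αβ})` with
`π_{(i,j),(α,β)} = ½(sign(α−i)−sign(β−j)) y_{iβ} y_{αj}
  + ½(S_{i,β+k}+S_{j+k,α}−S_{i,α}−S_{j+k,β+k}) y_{ij} y_{αβ}`. -/
noncomputable def grBracket {k m : ℕ} (S : Matrix (Fin (k + m)) (Fin (k + m)) ℂ)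
    (f g : MvPolynomial (Fin k × Fin m) ℂ) : MvPolynomial (Fin k × Fin m) ℂ :=
  ∑ p : Fin k × Fin m, ∑ q : Fin k × Fin m,
    (C ((1 / 2 : ℂ) *
          ((Int.sign ((q.1 : ℤ) - (p.1 : ℤ)) - Int.sign ((q.2 : ℤ) - (p.2 : ℤ)) : ℤ) : ℂ))
        * X (p.1, q.2) * X (q.1, p.2)
      + C ((1 / 2 : ℂ) *
          (S (Fin.castAdd m p.1) (Fin.natAdd k q.2) + S (Fin.natAdd k p.2) (Fin.castAdd m q.1)
            - S (Fin.castAdd m p.1) (Fin.castAdd m q.1)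
            - S (Fin.natAdd k p.2) (Fin.natAdd k q.2)))
        * X (p.1, p.2) * X (q.1, q.2))
    * pderiv p f * pderiv q g

/-!
A bracket `{f, g} = Σ π_{pq} ∂_p f ∂_q g` given by an antisymmetric bivector `π` is a biderivation,
so its Jacobiator is a derivation in each argument; it therefore vanishes as soon as it vanishes
on coordinate functions, where it is the Schouten expression
`Σ_q (π_{aq} ∂_q π_{bc} + π_{bq} ∂_q π_{ca} + π_{cq} ∂_q π_{ab})`.
For `π = π^{Gr}_S` with `S` antisymmetric, all terms involving `S` cancel identically in this
expression, and what remains is `¼ (U - V) (y_{iδ} y_{αj} y_{γβ} - y_{αδ} y_{iβ} y_{γj})`, where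
`U` and `V` are the cyclic sums of products of signs of the row differences `α - i, γ - α, i - γ`
and of the column differences. Both equal `-1` unless the three row (resp. column) indices
coincide, and in that case the two monomials agree.
-/

open scoped Matrix

namespace MvPolynomial

variable {σ R : Type*} [CommRing R]

theorem pderiv_pderiv_comm (i j : σ) (f : MvPolynomial σ R) :
    pderiv i (pderiv j f) = pderiv j (pderiv i f) := by
  have h : ⁅pderiv i, pderiv j⁆ = (0 : Derivation R (MvPolynomial σ R) (MvPolynomial σ R)) :=
    derivation_ext fun l => by
      classical
      rw [Derivation.commutator_apply, pderiv_X, pderiv_X, Pi.single_apply, Pi.single_apply]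
      split_ifs <;> simp
  have := congr($h f)
  rwa [Derivation.commutator_apply, Derivation.zero_apply, sub_eq_zero] at this

variable [Fintype σ] (π : σ → σ → MvPolynomial σ R)

noncomputable def bivectorBracket (f g : MvPolynomial σ R) : MvPolynomial σ R :=
  ∑ p, ∑ q, π p q * pderiv p f * pderiv q g

theorem bivectorBracket_add_left (f₁ f₂ g : MvPolynomial σ R) :
    bivectorBracket π (f₁ + f₂) g = bivectorBracket π f₁ g + bivectorBracket π f₂ g := by
  simp only [bivectorBracket, map_add, mul_add, add_mul, Finset.sum_add_distrib]

theorem bivectorBracket_add_right (f g₁ g₂ : MvPolynomial σ R) :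
    bivectorBracket π f (g₁ + g₂) = bivectorBracket π f g₁ + bivectorBracket π f g₂ := by
  simp only [bivectorBracket, map_add, mul_add, Finset.sum_add_distrib]

theorem bivectorBracket_mul_left (f₁ f₂ g : MvPolynomial σ R) :
    bivectorBracket π (f₁ * f₂) g
      = f₁ * bivectorBracket π f₂ g + f₂ * bivectorBracket π f₁ g := by
  simp only [bivectorBracket, Finset.mul_sum, ← Finset.sum_add_distrib, pderiv_mul]
  exact Finset.sum_congr rfl fun _ _ => Finset.sum_congr rfl fun _ _ => by ring

theorem bivectorBracket_mul_right (f g₁ g₂ : MvPolynomial σ R) :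
    bivectorBracket π f (g₁ * g₂)
      = g₁ * bivectorBracket π f g₂ + g₂ * bivectorBracket π f g₁ := by
  simp only [bivectorBracket, Finset.mul_sum, ← Finset.sum_add_distrib, pderiv_mul]
  exact Finset.sum_congr rfl fun _ _ => Finset.sum_congr rfl fun _ _ => by ring

theorem bivectorBracket_C_left (a : R) (g : MvPolynomial σ R) :
    bivectorBracket π (C a) g = 0 := by
  simp [bivectorBracket]

theorem bivectorBracket_C_right (f : MvPolynomial σ R) (a : R) :
    bivectorBracket π f (C a) = 0 := by
  simp [bivectorBracket]

theorem bivectorBracket_X_left [DecidableEq σ] (a : σ) (g : MvPolynomial σ R) :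
    bivectorBracket π (X a) g = ∑ q, π a q * pderiv q g := by
  simp [bivectorBracket, Pi.single_apply]

theorem bivectorBracket_X_X [DecidableEq σ] (a b : σ) :
    bivectorBracket π (X a) (X b) = π a b := by
  simp [bivectorBracket_X_left, Pi.single_apply]

theorem bivectorBracket_swap (hπ : ∀ p q, π q p = -π p q) (f g : MvPolynomial σ R) :
    bivectorBracket π g f = -bivectorBracket π f g := by
  rw [bivectorBracket, Finset.sum_comm, bivectorBracket, ← Finset.sum_neg_distrib]
  refine Finset.sum_congr rfl fun p _ => ?_
  rw [← Finset.sum_neg_distrib]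
  exact Finset.sum_congr rfl fun q _ => by rw [hπ]; ring

noncomputable def jacobiator (f g h : MvPolynomial σ R) : MvPolynomial σ R :=
  bivectorBracket π f (bivectorBracket π g h) + bivectorBracket π g (bivectorBracket π h f)
    + bivectorBracket π h (bivectorBracket π f g)

theorem jacobiator_rotate (f g h : MvPolynomial σ R) :
    jacobiator π f g h = jacobiator π g h f := by
  simp only [jacobiator]; ring

theorem jacobiator_C_left (a : R) (g h : MvPolynomial σ R) : jacobiator π (C a) g h = 0 := by
  simp only [jacobiator, bivectorBracket_C_left, bivectorBracket_C_right]
  simp [bivectorBracket]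

theorem jacobiator_add_left (f₁ f₂ g h : MvPolynomial σ R) :
    jacobiator π (f₁ + f₂) g h = jacobiator π f₁ g h + jacobiator π f₂ g h := by
  simp only [jacobiator, bivectorBracket_add_left, bivectorBracket_add_right]; ring

theorem jacobiator_mul_left (hπ : ∀ p q, π q p = -π p q) (f₁ f₂ g h : MvPolynomial σ R) :
    jacobiator π (f₁ * f₂) g h = f₁ * jacobiator π f₂ g h + f₂ * jacobiator π f₁ g h := by
  simp only [jacobiator, bivectorBracket_mul_left, bivectorBracket_mul_right,
    bivectorBracket_add_right]
  rw [bivectorBracket_swap π hπ f₁ g, bivectorBracket_swap π hπ f₂ g]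
  ring

theorem jacobiator_eq_zero_of_X_left (hπ : ∀ p q, π q p = -π p q) {g h : MvPolynomial σ R}
    (hX : ∀ a, jacobiator π (X a) g h = 0) (f : MvPolynomial σ R) : jacobiator π f g h = 0 := by
  induction f using MvPolynomial.induction_on with
  | C a => exact jacobiator_C_left π a g h
  | add f₁ f₂ h₁ h₂ => rw [jacobiator_add_left, h₁, h₂, add_zero]
  | mul_X f a hf => rw [jacobiator_mul_left π hπ, hf, hX, mul_zero, mul_zero, add_zero]

theorem jacobiator_X_X_X [DecidableEq σ] (a b c : σ) :
    jacobiator π (X a) (X b) (X c)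
      = ∑ q, (π a q * pderiv q (π b c) + π b q * pderiv q (π c a) + π c q * pderiv q (π a b)) := by
  simp only [jacobiator, bivectorBracket_X_X]
  simp only [bivectorBracket_X_left, Finset.sum_add_distrib]

theorem bivectorBracket_jacobi (hπ : ∀ p q, π q p = -π p q)
    (hschouten : ∀ a b c, ∑ q, (π a q * pderiv q (π b c) + π b q * pderiv q (π c a)
      + π c q * pderiv q (π a b)) = 0)
    (f g h : MvPolynomial σ R) : jacobiator π f g h = 0 := by
  classical
  refine jacobiator_eq_zero_of_X_left π hπ (fun b => ?_) f
  rw [jacobiator_rotate, jacobiator_rotate]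
  refine jacobiator_eq_zero_of_X_left π hπ (fun c => ?_) h
  rw [jacobiator_rotate, jacobiator_rotate]
  refine jacobiator_eq_zero_of_X_left π hπ (fun a => ?_) g
  rw [jacobiator_X_X_X, hschouten]

end MvPolynomial

theorem Int.sign_sub_swap (x y : ℤ) : (x - y).sign = -(y - x).sign := by
  rw [← neg_sub, Int.sign_neg]

theorem Fin.sign_sub_cyclic {n : ℕ} (x y z : Fin n) :
    ((y : ℤ) - x).sign * ((z : ℤ) - y).sign + ((z : ℤ) - y).sign * ((x : ℤ) - z).sign
      + ((x : ℤ) - z).sign * ((y : ℤ) - x).sign = if x = y ∧ y = z then 0 else -1 := by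
  simp only [Int.sign_eq_sign, sign_apply, Fin.ext_iff]
  split_ifs <;> simp <;> omega

section Grassmannian

variable {k m : ℕ}

noncomputable def grBivector (S : Matrix (Fin (k + m)) (Fin (k + m)) ℂ) (p q : Fin k × Fin m) :
    MvPolynomial (Fin k × Fin m) ℂ :=
  C ((1 / 2 : ℂ) *
        ((Int.sign ((q.1 : ℤ) - (p.1 : ℤ)) - Int.sign ((q.2 : ℤ) - (p.2 : ℤ)) : ℤ) : ℂ))
      * X (p.1, q.2) * X (q.1, p.2)
    + C ((1 / 2 : ℂ) *
        (S (Fin.castAdd m p.1) (Fin.natAdd k q.2) + S (Fin.natAdd k p.2) (Fin.castAdd m q.1)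
          - S (Fin.castAdd m p.1) (Fin.castAdd m q.1)
          - S (Fin.natAdd k p.2) (Fin.natAdd k q.2)))
      * X (p.1, p.2) * X (q.1, q.2)

theorem grBracket_eq_bivectorBracket (S : Matrix (Fin (k + m)) (Fin (k + m)) ℂ) :
    grBracket S = bivectorBracket (grBivector S) := rfl

theorem grBivector_swap (T : Matrix (Fin (k + m)) (Fin (k + m)) ℂ) (p q : Fin k × Fin m) :
    grBivector (T - Tᵀ) q p = -grBivector (T - Tᵀ) p q := by
  simp only [grBivector, Int.sign_sub_swap (p.1 : ℤ), Int.sign_sub_swap (p.2 : ℤ),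
    Matrix.sub_apply, Matrix.transpose_apply]
  push_cast
  simp only [map_mul, map_add, map_sub, map_neg]
  ring

theorem grBivector_schouten (T : Matrix (Fin (k + m)) (Fin (k + m)) ℂ) (a b c : Fin k × Fin m) :
    ∑ q, (grBivector (T - Tᵀ) a q * pderiv q (grBivector (T - Tᵀ) b c)
      + grBivector (T - Tᵀ) b q * pderiv q (grBivector (T - Tᵀ) c a)
      + grBivector (T - Tᵀ) c q * pderiv q (grBivector (T - Tᵀ) a b)) = 0 := by
  obtain ⟨i, j⟩ := a; obtain ⟨α, β⟩ := b; obtain ⟨γ, δ⟩ := c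
  have hresidual :
      (C ((((α : ℤ) - i).sign * ((γ : ℤ) - α).sign + ((γ : ℤ) - α).sign * ((i : ℤ) - γ).sign
          + ((i : ℤ) - γ).sign * ((α : ℤ) - i).sign : ℤ) : ℂ)
        - C ((((β : ℤ) - j).sign * ((δ : ℤ) - β).sign + ((δ : ℤ) - β).sign * ((j : ℤ) - δ).sign
          + ((j : ℤ) - δ).sign * ((β : ℤ) - j).sign : ℤ) : ℂ))
        * (X (i, δ) * X (α, j) * X (γ, β) - X (α, δ) * X (i, β) * X (γ, j)) = 0 := by
    rw [Fin.sign_sub_cyclic, Fin.sign_sub_cyclic]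
    split_ifs with hrow hcol hcol
    · simp
    · obtain ⟨rfl, rfl⟩ := hrow; ring
    · obtain ⟨rfl, rfl⟩ := hcol; ring
    · simp
  push_cast at hresidual
  simp only [map_add, map_mul] at hresidual
  simp only [grBivector, map_add, pderiv_mul, pderiv_C, pderiv_X, Pi.single_apply, zero_mul,
    zero_add, mul_one, mul_add, add_mul, mul_ite, ite_mul, mul_zero, Finset.sum_add_distrib,
    Finset.sum_ite_eq, Finset.mem_univ, if_true, Matrix.sub_apply, Matrix.transpose_apply]
  -- orient every sign atom as in `hresidual`, so that `ring` sees `sign (x - y) = -sign (y - x)`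
  simp only [Int.sign_sub_swap (i : ℤ) α, Int.sign_sub_swap (α : ℤ) γ, Int.sign_sub_swap (γ : ℤ) i,
    Int.sign_sub_swap (j : ℤ) β, Int.sign_sub_swap (β : ℤ) δ, Int.sign_sub_swap (δ : ℤ) j]
  push_cast
  simp only [map_mul, map_add, map_sub, map_neg]
  linear_combination C (1 / 2 : ℂ) ^ 2 * hresidual

end Grassmannian

theorem grBracket_jacobi_general (k m : ℕ)
    (S : Matrix (Fin (k + m)) (Fin (k + m)) ℂ) (hS : Matrix.transpose S = -S)
    (f g h : MvPolynomial (Fin k × Fin m) ℂ) :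
    grBracket S f (grBracket S g h)
      + grBracket S g (grBracket S h f)
      + grBracket S h (grBracket S f g) = 0 := by
  -- writing `S = T - Tᵀ` makes its antisymmetry visible to `ring`
  obtain ⟨T, rfl⟩ : ∃ T, S = T - Tᵀ :=
    ⟨(1 / 2 : ℂ) • S, by rw [Matrix.transpose_smul, hS]; module⟩
  rw [grBracket_eq_bivectorBracket]
  exact bivectorBracket_jacobi _ (grBivector_swap T) (grBivector_schouten T) f g h

/-- The bracket `{·,·}_S^{Gr}` on the open Schubert cell satisfies the Jacobi
identity, i.e. it is a Poisson bracket. -/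
theorem grBracket_jacobi (k m : ℕ) (hk : 1 ≤ k) (hm : 1 ≤ m)
    (S : Matrix (Fin (k + m)) (Fin (k + m)) ℂ) (hS : Matrix.transpose S = -S)
    (f g h : MvPolynomial (Fin k × Fin m) ℂ) :
    grBracket S f (grBracket S g h)
      + grBracket S g (grBracket S h f)
      + grBracket S h (grBracket S f g) = 0 :=
  grBracket_jacobi_general k m S hS f g h
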